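/- Let 𝓑 be a basis of a Banach space X and 𝐧 a strictly increasing sequence of positive integers. Then 𝓑 is (𝐧, almost greedy) if and only if 𝓑 is quasi-greedy and (𝐧, democratic). -/

import Mathlib

open scoped BigOperators ENNReal NNReal

/-- The collection `𝕋(𝐧)`: pairs of finite sets `(A, D)` with `A ⊆ 𝐧`, `|A| ≤ |D|`
and `A < D ∩ 𝐧`. -/
def TPair (seq : ℕ → ℕ) (A D : Finset ℕ) : Prop :=
  (↑A : Set ℕ) ⊆ Set.range seq ∧ A.card ≤ D.card ∧
    ∀ a ∈ A, ∀ d ∈ D, d ∈ Set.range seq → a < d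

/-- The collection `𝕊(𝐧)`: pairs of finite sets `(A, D)` with `A ⊆ 𝐧` and `|A| ≤ |D|`. -/
def SPair (seq : ℕ → ℕ) (A D : Finset ℕ) : Prop :=
  (↑A : Set ℕ) ⊆ Set.range seq ∧ A.card ≤ D.card

/-- The interval `{n_{k+1}, …, n_{k+m}}` of `m` consecutive terms of the sequence `seq`
(0-indexed: `seq k, …, seq (k+m-1)`). -/
def intervalSet (seq : ℕ → ℕ) (k m : ℕ) : Finset ℕ :=
  (Finset.range m).image fun i => seq (k + i)

/-- The (1-based) index `ι(max A)` of the largest element of `A` in the sequence `seq`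
(`0` if `A` is empty). -/
noncomputable def iotaMax (seq : ℕ → ℕ) (A : Finset ℕ) : ℕ :=
  if h : A.Nonempty then sInf {i | seq i = A.max' h} + 1 else 0

/-- The collection `𝕋^ω(𝐧)`: pairs of finite sets `(A, D)` with `A ⊆ 𝐧`, `ω(A) ≤ ω(D)`
and `A < D ∩ 𝐧`. -/
def WTPair (w : Set ℕ → ℝ≥0∞) (seq : ℕ → ℕ) (A D : Finset ℕ) : Prop :=
  (↑A : Set ℕ) ⊆ Set.range seq ∧ w (↑A : Set ℕ) ≤ w (↑D : Set ℕ) ∧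
    ∀ a ∈ A, ∀ d ∈ D, d ∈ Set.range seq → a < d

/-- A (semi-normalized) basis `(e_n)` of a Banach space `X`, together with its biorthogonal
functionals `(e_n^*)`: the span of the `e_n` is norm-dense, `e_j^*(e_k) = δ_{jk}`, and the
norms of the `e_n` and `e_n^*` are bounded above and away from zero. -/
structure BasisOf (𝕜 : Type*) (X : Type*) [RCLike 𝕜] [NormedAddCommGroup X]
    [NormedSpace 𝕜 X] where
  e : ℕ → X
  coord : ℕ → X →L[𝕜] 𝕜
  dense_span : Dense (↑(Submodule.span 𝕜 (Set.range e)) : Set X)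
  biorth : ∀ j k : ℕ, coord j (e k) = if j = k then (1 : 𝕜) else 0
  norm_bounds : ∃ c₁ c₂ : ℝ, 0 < c₁ ∧ (∀ n, c₁ ≤ ‖e n‖ ∧ c₁ ≤ ‖coord n‖) ∧
    ∀ n, ‖e n‖ ≤ c₂ ∧ ‖coord n‖ ≤ c₂

namespace BasisOf

variable {𝕜 : Type*} {X : Type*} [RCLike 𝕜] [NormedAddCommGroup X] [NormedSpace 𝕜 X]
variable (B : BasisOf 𝕜 X)

/-- The projection `P_A(x) = ∑_{n ∈ A} e_n^*(x) e_n`. -/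
noncomputable def proj (A : Finset ℕ) (x : X) : X := ∑ n ∈ A, B.coord n x • B.e n

/-- `1_{εA} = ∑_{n ∈ A} ε_n e_n`. -/
noncomputable def sgnSum (ε : ℕ → 𝕜) (A : Finset ℕ) : X := ∑ n ∈ A, ε n • B.e n

/-- `1_A = ∑_{n ∈ A} e_n`. -/
noncomputable def ones (A : Finset ℕ) : X := ∑ n ∈ A, B.e n

/-- `P^𝐧_m(x) = ∑_{i=1}^m e_{n_i}^*(x) e_{n_i}`, the projection on the first `m` terms of the
subsequence given by `seq`. -/
noncomputable def projSeq (seq : ℕ → ℕ) (m : ℕ) (x : X) : X :=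
  ∑ i ∈ Finset.range m, B.coord (seq i) x • B.e (seq i)

/-- `A` is a greedy set of `x`: the coefficients inside `A` dominate those outside. -/
def IsGreedySet (x : X) (A : Finset ℕ) : Prop :=
  ∀ a ∈ A, ∀ b ∉ A, ‖B.coord b x‖ ≤ ‖B.coord a x‖

/-- The support `{n : e_n^*(x) ≠ 0}`. -/
def supp (x : X) : Set ℕ := {n | B.coord n x ≠ 0}

/-- `𝓑` is `C`-(`𝐧`, strong partially greedy):
`‖x - G_m(x)‖ ≤ C ⋅ σ̂^𝐧_m(x)` for all `x`, all `m ≥ 1` and all greedy sums. -/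
def SPGWith (seq : ℕ → ℕ) (C : ℝ) : Prop :=
  ∀ x : X, ∀ m : ℕ, 1 ≤ m → ∀ A : Finset ℕ, A.card = m → B.IsGreedySet x A →
    ∀ k : ℕ, k ≤ m → ‖x - B.proj A x‖ ≤ C * ‖x - B.projSeq seq k x‖

/-- `𝓑` is (`𝐧`, strong partially greedy). -/
def SPG (seq : ℕ → ℕ) : Prop := ∃ C : ℝ, 1 ≤ C ∧ B.SPGWith seq C

/-- `𝓑` is quasi-greedy with constant `C`. -/
def QuasiGreedyWith (C : ℝ) : Prop :=
  ∀ x : X, ∀ A : Finset ℕ, A.Nonempty → B.IsGreedySet x A → ‖B.proj A x‖ ≤ C * ‖x‖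

/-- `𝓑` is quasi-greedy. -/
def QuasiGreedy : Prop := ∃ C : ℝ, B.QuasiGreedyWith C

/-- `𝓑` is suppression quasi-greedy with constant `C`. -/
def SuppQGWith (C : ℝ) : Prop :=
  ∀ x : X, ∀ A : Finset ℕ, A.Nonempty → B.IsGreedySet x A → ‖x - B.proj A x‖ ≤ C * ‖x‖

/-- `𝓑` is `C`-(`𝐧`, PSLC). -/
def PSLCWith (seq : ℕ → ℕ) (C : ℝ) : Prop :=
  ∀ x : X, (∀ n, ‖B.coord n x‖ ≤ 1) → ∀ A D : Finset ℕ, TPair seq A D →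
    (∀ d ∈ D, B.coord d x = 0) →
    (∀ a ∈ A, ∀ j : ℕ, (j ∈ D ∨ B.coord j x ≠ 0) → j ∈ Set.range seq → a < j) →
    ∀ ε δ : ℕ → 𝕜, (∀ n, ‖ε n‖ = 1) → (∀ n, ‖δ n‖ = 1) →
      ‖x + B.sgnSum ε A‖ ≤ C * ‖x + B.sgnSum δ D‖

/-- `𝓑` is (`𝐧`, PSLC). -/
def PSLC (seq : ℕ → ℕ) : Prop := ∃ C : ℝ, 1 ≤ C ∧ B.PSLCWith seq C

/-- `𝓑` is (`𝐧`, superconservative) with constant `C`. -/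
def SuperconservativeWith (seq : ℕ → ℕ) (C : ℝ) : Prop :=
  ∀ A D : Finset ℕ, TPair seq A D →
    ∀ ε δ : ℕ → 𝕜, (∀ n, ‖ε n‖ = 1) → (∀ n, ‖δ n‖ = 1) →
      ‖B.sgnSum ε A‖ ≤ C * ‖B.sgnSum δ D‖

/-- `𝓑` is (`𝐧`, superconservative). -/
def Superconservative (seq : ℕ → ℕ) : Prop :=
  ∃ C : ℝ, 0 < C ∧ B.SuperconservativeWith seq C

/-- `𝓑` is (`𝐧`, conservative) with constant `C`. -/
def ConservativeWith (seq : ℕ → ℕ) (C : ℝ) : Prop :=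
  ∀ A D : Finset ℕ, TPair seq A D → ‖B.ones A‖ ≤ C * ‖B.ones D‖

/-- `𝓑` is (`𝐧`, conservative). -/
def Conservative (seq : ℕ → ℕ) : Prop := ∃ C : ℝ, 0 < C ∧ B.ConservativeWith seq C

/-- `𝓑` is (`𝐧`, democratic) with constant `C`. -/
def DemocraticWith (seq : ℕ → ℕ) (C : ℝ) : Prop :=
  ∀ A D : Finset ℕ, SPair seq A D → ‖B.ones A‖ ≤ C * ‖B.ones D‖

/-- `𝓑` is (`𝐧`, democratic). -/
def Democratic (seq : ℕ → ℕ) : Prop := ∃ C : ℝ, B.DemocraticWith seq C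

/-- `𝓑` is (`𝐧`, almost greedy) with constant `C`:
`‖x - G_m(x)‖ ≤ C σ̃^𝐧_m(x)` where `σ̃^𝐧_m(x) = inf {‖x - P_D(x)‖ : D ⊆ 𝐧, |D| = m}`. -/
def AlmostGreedyWith (seq : ℕ → ℕ) (C : ℝ) : Prop :=
  ∀ x : X, ∀ m : ℕ, 1 ≤ m → ∀ A : Finset ℕ, A.card = m → B.IsGreedySet x A →
    ∀ D : Finset ℕ, (↑D : Set ℕ) ⊆ Set.range seq → D.card = m →
      ‖x - B.proj A x‖ ≤ C * ‖x - B.proj D x‖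

/-- `𝓑` is (`𝐧`, almost greedy). -/
def AlmostGreedy (seq : ℕ → ℕ) : Prop := ∃ C : ℝ, 1 ≤ C ∧ B.AlmostGreedyWith seq C

/-- `𝓑` is 1-unconditional. -/
def OneUnconditional : Prop :=
  ∀ (F : Finset ℕ) (a b : ℕ → 𝕜), (∀ n, ‖a n‖ ≤ ‖b n‖) →
    ‖∑ n ∈ F, a n • B.e n‖ ≤ ‖∑ n ∈ F, b n • B.e n‖

/-- `𝓑` is `C`-(`𝐧`, consecutive almost greedy) of type I. -/
def CAGIWith (seq : ℕ → ℕ) (C : ℝ) : Prop :=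
  ∀ x : X, ∀ m : ℕ, 1 ≤ m → ∀ A : Finset ℕ, A.card = m → B.IsGreedySet x A →
    ∀ k : ℕ, ‖x - B.proj A x‖ ≤ C * ‖x - B.proj (intervalSet seq k m) x‖

/-- `𝓑` is `C`-(`𝐧`, consecutive almost greedy) of type II. -/
def CAGIIWith (seq : ℕ → ℕ) (C : ℝ) : Prop :=
  ∀ x : X, ∀ m : ℕ, 1 ≤ m → ∀ A : Finset ℕ, A.card = m → B.IsGreedySet x A →
    ∀ k p : ℕ, ((↑(intervalSet seq k p) : Set ℕ) ∩ B.supp x).ncard ≤ m →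
      ‖x - B.proj A x‖ ≤ C * ‖x - B.proj (intervalSet seq k p) x‖

/-- `𝓑` is `C`-(`𝐧`, RSLC). -/
def RSLCWith (seq : ℕ → ℕ) (C : ℝ) : Prop :=
  ∀ x : X, (∀ n, ‖B.coord n x‖ ≤ 1) → ∀ A D : Finset ℕ, SPair seq A D →
    (∀ d ∈ D, B.coord d x = 0) →
    (∀ j : ℕ, (j ∈ D ∨ B.coord j x ≠ 0) → j ∈ Set.range seq →
      (∀ a ∈ A, j < a) ∨ (∀ a ∈ A, a < j)) →
    ∀ ε δ : ℕ → 𝕜, (∀ n, ‖ε n‖ = 1) → (∀ n, ‖δ n‖ = 1) →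
      ‖x + B.sgnSum ε A‖ ≤ C * ‖x + B.sgnSum δ D‖

/-- `𝓑` is `C`-(`𝐧`, SLC). -/
def SLCWith (seq : ℕ → ℕ) (C : ℝ) : Prop :=
  ∀ x : X, (∀ n, ‖B.coord n x‖ ≤ 1) → ∀ A D : Finset ℕ, SPair seq A D →
    Disjoint A D → (∀ a ∈ A, B.coord a x = 0) → (∀ d ∈ D, B.coord d x = 0) →
    ∀ ε δ : ℕ → 𝕜, (∀ n, ‖ε n‖ = 1) → (∀ n, ‖δ n‖ = 1) →
      ‖x + B.sgnSum ε A‖ ≤ C * ‖x + B.sgnSum δ D‖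

/-- The Lebesgue-type parameter `L̂^𝐧_m`: the least constant `C ∈ [0,∞]` with
`‖x - G_m(x)‖ ≤ C σ̂^𝐧_m(x)` for all `x` and all greedy sums `G_m(x)`. -/
noncomputable def Lhat (seq : ℕ → ℕ) (m : ℕ) : ℝ≥0∞ :=
  sInf {C : ℝ≥0∞ | ∀ (x : X) (A : Finset ℕ), A.card = m → B.IsGreedySet x A →
    ∀ k : ℕ, k ≤ m →
      (‖x - B.proj A x‖₊ : ℝ≥0∞) ≤ C * (‖x - B.projSeq seq k x‖₊ : ℝ≥0∞)}

/-- The parameter `g_m^c`. -/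
noncomputable def gc (m : ℕ) : ℝ≥0∞ :=
  ⨆ (x : X) (_ : x ≠ 0) (A : Finset ℕ) (_ : A.card ≤ m) (_ : B.IsGreedySet x A),
    (‖x - B.proj A x‖₊ : ℝ≥0∞) / (‖x‖₊ : ℝ≥0∞)

/-- The parameter `g̃_m`. -/
noncomputable def gtilde (m : ℕ) : ℝ≥0∞ :=
  ⨆ (x : X) (_ : x ≠ 0) (A : Finset ℕ) (A' : Finset ℕ) (_ : A ⊆ A') (_ : A.card < A'.card)
    (_ : A'.card ≤ m) (_ : B.IsGreedySet x A) (_ : B.IsGreedySet x A'),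
    (‖B.proj A' x - B.proj A x‖₊ : ℝ≥0∞) / (‖x‖₊ : ℝ≥0∞)

/-- The parameter `sc^𝐧_m`. -/
noncomputable def scParam (seq : ℕ → ℕ) (m : ℕ) : ℝ≥0∞ :=
  ⨆ (A : Finset ℕ) (D : Finset ℕ) (_ : TPair seq A D) (_ : D.card ≤ m)
    (_ : ∀ a ∈ A, a ≤ seq (m - 1)) (ε : ℕ → 𝕜) (_ : ∀ n, ‖ε n‖ = 1)
    (δ : ℕ → 𝕜) (_ : ∀ n, ‖δ n‖ = 1),
    (‖B.sgnSum ε A‖₊ : ℝ≥0∞) / (‖B.sgnSum δ D‖₊ : ℝ≥0∞)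

/-- The parameter `ω^𝐧_m`. -/
noncomputable def omegaParam (seq : ℕ → ℕ) (m : ℕ) : ℝ≥0∞ :=
  ⨆ (x : X) (_ : ∀ n, ‖B.coord n x‖ ≤ 1) (A : Finset ℕ) (D : Finset ℕ)
    (_ : (↑A : Set ℕ) ⊆ Set.range seq) (_ : A.card ≤ D.card) (_ : D.card ≤ m)
    (_ : ∀ a ∈ A, a ≤ seq (m - 1)) (_ : ∀ d ∈ D, B.coord d x = 0)
    (_ : ∀ a ∈ A, ∀ j : ℕ, (j ∈ D ∨ B.coord j x ≠ 0) → j ∈ Set.range seq → a < j)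
    (ε : ℕ → 𝕜) (_ : ∀ n, ‖ε n‖ = 1) (δ : ℕ → 𝕜) (_ : ∀ n, ‖δ n‖ = 1),
    (‖x + B.sgnSum ε A‖₊ : ℝ≥0∞) / (‖x + B.sgnSum δ D‖₊ : ℝ≥0∞)

/-- The parameter `ω̂^𝐧_m`. -/
noncomputable def omegaHatParam (seq : ℕ → ℕ) (m : ℕ) : ℝ≥0∞ :=
  ⨆ (x : X) (_ : ∀ n, ‖B.coord n x‖ ≤ 1) (A : Finset ℕ) (D : Finset ℕ)
    (_ : (↑A : Set ℕ) ⊆ Set.range seq) (_ : A.card ≤ D.card) (_ : D.card ≤ m)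
    (_ : ∀ a ∈ A, a ≤ seq (m - 1))
    (_ : ∀ d ∈ D, B.coord d (x - B.proj A x) = 0)
    (_ : ∀ a ∈ A, ∀ j : ℕ, (j ∈ D ∨ B.coord j (x - B.proj A x) ≠ 0) →
      j ∈ Set.range seq → a < j)
    (ε : ℕ → 𝕜) (_ : ∀ n, ‖ε n‖ = 1),
    (‖x‖₊ : ℝ≥0∞) / (‖x - B.proj A x + B.sgnSum ε D‖₊ : ℝ≥0∞)

/-- `κ = sup_{j,k} ‖e_j‖ ‖e_k^*‖`. -/
noncomputable def kappa : ℝ≥0∞ :=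
  ⨆ (j : ℕ) (k : ℕ), ((‖B.e j‖₊ * ‖B.coord k‖₊ : ℝ≥0) : ℝ≥0∞)

/-- `𝓑` is `𝐬`-(`𝐧`, strong partially greedy) with constant `C`:
the strong partially greedy inequality for all orders `m` in the sequence `s`. -/
def SPGOnWith (seq : ℕ → ℕ) (s : ℕ → ℕ) (C : ℝ) : Prop :=
  ∀ x : X, ∀ i : ℕ, ∀ A : Finset ℕ, A.card = s i → B.IsGreedySet x A →
    ∀ k : ℕ, k ≤ s i → ‖x - B.proj A x‖ ≤ C * ‖x - B.projSeq seq k x‖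

/-- `𝓑` is (`λ`, `𝐧`, strong partially greedy). -/
def LamSPG (seq : ℕ → ℕ) (lam : ℝ) : Prop :=
  ∃ C : ℝ, 1 ≤ C ∧ ∀ x : X, ∀ m : ℕ, 1 ≤ m →
    ∀ A : Finset ℕ, A.card = ⌈lam * (m : ℝ)⌉₊ → B.IsGreedySet x A →
      ∀ k : ℕ, k ≤ m → ‖x - B.proj A x‖ ≤ C * ‖x - B.projSeq seq k x‖

/-- `𝓑` is (`λ`, `𝐧`, PSLC). -/
def LamPSLC (seq : ℕ → ℕ) (lam : ℝ) : Prop :=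
  ∃ C : ℝ, 1 ≤ C ∧ ∀ x : X, (∀ n, ‖B.coord n x‖ ≤ 1) →
    ∀ A D : Finset ℕ, (↑A : Set ℕ) ⊆ Set.range seq → A.card ≤ D.card →
      (lam - 1) * (iotaMax seq A : ℝ) + A.card ≤ D.card →
      (∀ d ∈ D, B.coord d x = 0) →
      (∀ a ∈ A, ∀ j : ℕ, (j ∈ D ∨ B.coord j x ≠ 0) → j ∈ Set.range seq → a < j) →
      ∀ ε δ : ℕ → 𝕜, (∀ n, ‖ε n‖ = 1) → (∀ n, ‖δ n‖ = 1) →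
        ‖x + B.sgnSum ε A‖ ≤ C * ‖x + B.sgnSum δ D‖

/-- `𝓑` is (`λ`, `𝐧`, superconservative). -/
def LamSuperconservative (seq : ℕ → ℕ) (lam : ℝ) : Prop :=
  ∃ C : ℝ, 0 < C ∧ ∀ A D : Finset ℕ, TPair seq A D →
    (lam - 1) * (iotaMax seq A : ℝ) + A.card ≤ D.card →
    ∀ ε δ : ℕ → 𝕜, (∀ n, ‖ε n‖ = 1) → (∀ n, ‖δ n‖ = 1) →
      ‖B.sgnSum ε A‖ ≤ C * ‖B.sgnSum δ D‖

/-- `𝓑` is (`λ`, `𝐧`, conservative). -/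
def LamConservative (seq : ℕ → ℕ) (lam : ℝ) : Prop :=
  ∃ C : ℝ, 0 < C ∧ ∀ A D : Finset ℕ, TPair seq A D →
    (lam - 1) * (iotaMax seq A : ℝ) + A.card ≤ D.card →
    ‖B.ones A‖ ≤ C * ‖B.ones D‖

/-- `𝓑` is `ω`-(`𝐧`, strong partially greedy) for the weight on sets `w`. -/
def WSPG (seq : ℕ → ℕ) (w : Set ℕ → ℝ≥0∞) : Prop :=
  ∃ C : ℝ, 1 ≤ C ∧ ∀ x : X, ∀ m : ℕ, 1 ≤ m → ∀ A : Finset ℕ, A.card = m →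
    B.IsGreedySet x A → ∀ m' : ℕ,
      w (↑((Finset.range m').image seq \ A) : Set ℕ) ≤
        w (↑(A \ (Finset.range m').image seq) : Set ℕ) →
      ‖x - B.proj A x‖ ≤ C * ‖x - B.proj ((Finset.range m').image seq) x‖

/-- `𝓑` is `ω`-(`𝐧`, PSLC). -/
def WPSLC (seq : ℕ → ℕ) (w : Set ℕ → ℝ≥0∞) : Prop :=
  ∃ C : ℝ, 1 ≤ C ∧ ∀ x : X, (∀ n, ‖B.coord n x‖ ≤ 1) →
    ∀ A D : Finset ℕ, WTPair w seq A D →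
      (∀ d ∈ D, B.coord d x = 0) →
      (∀ a ∈ A, ∀ j : ℕ, (j ∈ D ∨ B.coord j x ≠ 0) → j ∈ Set.range seq → a < j) →
      ∀ ε δ : ℕ → 𝕜, (∀ n, ‖ε n‖ = 1) → (∀ n, ‖δ n‖ = 1) →
        ‖x + B.sgnSum ε A‖ ≤ C * ‖x + B.sgnSum δ D‖

/-- `𝓑` is `ω`-(`𝐧`, superconservative). -/
def WSuperconservative (seq : ℕ → ℕ) (w : Set ℕ → ℝ≥0∞) : Prop :=
  ∃ C : ℝ, 0 < C ∧ ∀ A D : Finset ℕ, WTPair w seq A D →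
    ∀ ε δ : ℕ → 𝕜, (∀ n, ‖ε n‖ = 1) → (∀ n, ‖δ n‖ = 1) →
      ‖B.sgnSum ε A‖ ≤ C * ‖B.sgnSum δ D‖

/-- `𝓑` is `ω`-(`𝐧`, conservative). -/
def WConservative (seq : ℕ → ℕ) (w : Set ℕ → ℝ≥0∞) : Prop :=
  ∃ C : ℝ, 0 < C ∧ ∀ A D : Finset ℕ, WTPair w seq A D → ‖B.ones A‖ ≤ C * ‖B.ones D‖

end BasisOf

/-- A Banach space over `𝕜` equipped with a basis. -/
structure BanachWithBasis (𝕜 : Type*) [RCLike 𝕜] where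
  carrier : Type
  [grp : NormedAddCommGroup carrier]
  [mod : NormedSpace 𝕜 carrier]
  [comp : CompleteSpace carrier]
  basis : BasisOf 𝕜 carrier

attribute [instance] BanachWithBasis.grp BanachWithBasis.mod BanachWithBasis.comp

/-!
Almost greedy ⇒ quasi-greedy: the coordinates of `x` tend to `0`, so `x` is almost unchanged by
the projection onto `m` far-out terms of `𝐧`, which is an admissible competitor for a greedy sum
of order `m`. Almost greedy ⇒ democratic: for disjoint `P ⊆ 𝐧` and `Q` with `|P| ≤ |Q|`, the
vector `1_{P ∪ Q}` has greedy set `Q`, with competitor `P ∪ R` for a fresh `R ⊆ 𝐧`; this gives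
`‖1_P‖ ≤ C ‖1_Q‖`, and a fresh `F ⊆ 𝐧` links any `(A, D) ∈ 𝕊(𝐧)` through two such steps.

Conversely, for a greedy set `A` and `D ⊆ 𝐧` of the same size put `y = x - P_D x`, so that
`x - P_A x = (y - P_{A \ D} y) + P_{D \ A} x`. The first term is bounded by quasi-greediness. The
coefficients of the second are at most `α = min_{n ∈ A} |e_n^*(x)|`, so it is `≲ α ‖1_{D \ A}‖`,
by democracy `≲ α ‖1_{A \ D}‖`, and this is `≲ ‖y‖` because `A \ D` is a greedy set of `y` whose
coefficients are all `≥ α`. Both coefficient estimates come from an Abel summation: a combination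
with coefficients in `[0, K]` is bounded by `K` times the largest sum over a superlevel set of the
coefficients, and for the sums at hand those superlevel sets are (differences of) greedy sets.
-/

theorem norm_sum_smul_le_of_superlevel {𝕜 E ι : Type*} [RCLike 𝕜] [NormedAddCommGroup E]
    [NormedSpace 𝕜 E] (G : Finset ι) (u : ι → E) (c : ι → ℝ) {K M : ℝ} (hK : 0 ≤ K)
    (hc : ∀ n ∈ G, 0 ≤ c n ∧ c n ≤ K) (hM : ∀ s : ℝ, ‖∑ n ∈ G with s < c n, u n‖ ≤ M) :
    ‖∑ n ∈ G, (c n : 𝕜) • u n‖ ≤ K * M := by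
  induction G using Finset.strongInduction generalizing c K with
  | H G ih =>
  rcases G.eq_empty_or_nonempty with rfl | hG
  · simpa using mul_nonneg hK ((norm_nonneg _).trans (hM 0))
  -- peel off the smallest coefficient `μ` and recurse on the set where `c > μ`
  obtain ⟨m, hm, hmin⟩ := G.exists_min_image c hG
  set μ := c m
  have hsub : G.filter (μ < c ·) ⊂ G := Finset.filter_ssubset.2 ⟨m, hm, lt_irrefl μ⟩
  have hsplit : ∑ n ∈ G, (c n : 𝕜) • u n =
      (μ : 𝕜) • ∑ n ∈ G, u n + ∑ n ∈ G with μ < c n, ((c n - μ : ℝ) : 𝕜) • u n := by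
    rw [Finset.sum_filter_of_ne fun n hn hne => ?_, Finset.smul_sum, ← Finset.sum_add_distrib]
    · refine Finset.sum_congr rfl fun n _ => ?_
      push_cast
      module
    · refine (hmin n hn).lt_of_ne fun h => hne ?_
      simp [← h]
  have hrest := ih _ hsub (fun n => c n - μ) (K := K - μ) (by linarith [(hc m hm).2])
    (fun n hn => by
      have := (Finset.mem_filter.1 hn).2
      exact ⟨by linarith, by linarith [(hc n (Finset.filter_subset _ _ hn)).2]⟩)
    (fun s => by
      rw [Finset.filter_filter]
      convert hM (max s 0 + μ) using 3
      refine Finset.filter_congr fun n _ => ?_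
      rw [lt_sub_iff_add_lt, ← max_add_add_right, max_lt_iff, zero_add, and_comm])
  have htotal : ‖∑ n ∈ G, u n‖ ≤ M := by
    convert hM (-1) using 3
    exact (Finset.filter_true_of_mem fun n hn => by linarith [(hc n hn).1]).symm
  calc ‖∑ n ∈ G, (c n : 𝕜) • u n‖
      ≤ μ * ‖∑ n ∈ G, u n‖ + ‖∑ n ∈ G with μ < c n, ((c n - μ : ℝ) : 𝕜) • u n‖ := by
        rw [hsplit]
        refine (norm_add_le _ _).trans_eq ?_
        rw [norm_smul, RCLike.norm_ofReal, abs_of_nonneg (hc m hm).1]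
    _ ≤ μ * M + (K - μ) * M := by gcongr; exact (hc m hm).1
    _ = K * M := by ring

theorem exists_finset_subset_range_disjoint {seq : ℕ → ℕ} (hseq : Function.Injective seq)
    {F : Set ℕ} (hF : F.Finite) (m : ℕ) :
    ∃ E : Finset ℕ, (↑E : Set ℕ) ⊆ Set.range seq ∧ E.card = m ∧ Disjoint (↑E : Set ℕ) F := by
  obtain ⟨E, hE, hcard⟩ :=
    ((Set.infinite_range_of_injective hseq).sdiff hF).exists_subset_card_eq m
  exact ⟨E, hE.trans Set.sdiff_subset, hcard,
    Set.disjoint_of_subset_left hE Set.disjoint_sdiff_left⟩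

namespace BasisOf

variable {𝕜 X : Type*} [RCLike 𝕜] [NormedAddCommGroup X] [NormedSpace 𝕜 X]
  {B : BasisOf 𝕜 X}

section Algebra

variable (B)

theorem coord_sum_smul (n : ℕ) (S : Finset ℕ) (f : ℕ → 𝕜) :
    B.coord n (∑ k ∈ S, f k • B.e k) = if n ∈ S then f n else 0 := by
  simp [map_sum, B.biorth, Finset.sum_ite_eq]

theorem coord_proj (n : ℕ) (S : Finset ℕ) (x : X) :
    B.coord n (B.proj S x) = if n ∈ S then B.coord n x else 0 :=
  B.coord_sum_smul n S _

theorem ones_eq_sgnSum (S : Finset ℕ) : B.ones S = B.sgnSum (fun _ => 1) S := by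
  simp [ones, sgnSum]

theorem coord_sgnSum (n : ℕ) (ε : ℕ → 𝕜) (S : Finset ℕ) :
    B.coord n (B.sgnSum ε S) = if n ∈ S then ε n else 0 :=
  B.coord_sum_smul n S ε

theorem proj_sgnSum (ε : ℕ → 𝕜) (S T : Finset ℕ) :
    B.proj S (B.sgnSum ε T) = B.sgnSum ε (S ∩ T) := by
  simp only [proj, coord_sgnSum, ite_smul, zero_smul, Finset.sum_ite_mem]
  rfl

theorem proj_ones (S T : Finset ℕ) : B.proj S (B.ones T) = B.ones (S ∩ T) := by
  simp only [ones_eq_sgnSum, proj_sgnSum]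

theorem ones_sub_proj_ones (S T : Finset ℕ) :
    B.ones T - B.proj S (B.ones T) = B.ones (T \ S) := by
  rw [proj_ones, Finset.inter_comm, sub_eq_iff_eq_add']
  exact (Finset.sum_inter_add_sum_sdiff T S B.e).symm

@[simp]
theorem proj_empty (x : X) : B.proj ∅ x = 0 := Finset.sum_empty

theorem proj_sub (S : Finset ℕ) (x y : X) : B.proj S (x - y) = B.proj S x - B.proj S y := by
  simp only [proj, map_sub, sub_smul, Finset.sum_sub_distrib]

theorem proj_proj (S T : Finset ℕ) (x : X) : B.proj S (B.proj T x) = B.proj (S ∩ T) x := by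
  simp only [proj, coord_sum_smul, ite_smul, zero_smul, Finset.sum_ite_mem]

theorem proj_add_proj_sdiff (S T : Finset ℕ) (x : X) :
    B.proj S x + B.proj (T \ S) x = B.proj (S ∪ T) x := by
  rw [proj, proj, proj, ← Finset.sum_union Finset.disjoint_sdiff, Finset.union_sdiff_self_eq_union]

theorem sub_proj_eq_sub_proj_sdiff_add (A D : Finset ℕ) (x : X) :
    x - B.proj A x = (x - B.proj D x - B.proj (A \ D) (x - B.proj D x)) + B.proj (D \ A) x := by
  have hAD := B.proj_add_proj_sdiff A D x
  have hDA := B.proj_add_proj_sdiff D A x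
  rw [Finset.union_comm] at hDA
  rw [proj_sub, proj_proj, Finset.sdiff_inter_self, proj_empty, sub_zero]
  linear_combination (norm := abel_nf) hDA - hAD

theorem e_ne_zero (n : ℕ) : B.e n ≠ 0 := fun h => by
  simpa [h] using B.biorth n n

end Algebra

theorem isGreedySet_sgnSum {ε : ℕ → 𝕜} {S T : Finset ℕ} (hε : ∀ n ∈ T, ‖ε n‖ = 1)
    (h : S ⊆ T) : B.IsGreedySet (B.sgnSum ε T) S := by
  intro a ha b _
  rw [coord_sgnSum, coord_sgnSum, if_pos (h ha), hε a (h ha)]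
  split_ifs with hb
  · exact (hε b hb).le
  · simp

theorem isGreedySet_ones {S T : Finset ℕ} (h : S ⊆ T) : B.IsGreedySet (B.ones T) S := by
  rw [ones_eq_sgnSum]
  exact isGreedySet_sgnSum (fun _ _ => norm_one) h

/-- `coordSign y n = sgn (e_n^*(y))`, which is `0` when `e_n^*(y) = 0`. -/
noncomputable def coordSign (B : BasisOf 𝕜 X) (y : X) (n : ℕ) : 𝕜 :=
  (‖B.coord n y‖ : 𝕜)⁻¹ * B.coord n y

theorem norm_coordSign {y : X} {n : ℕ} (h : B.coord n y ≠ 0) : ‖B.coordSign y n‖ = 1 := by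
  rw [coordSign, norm_mul, norm_inv, RCLike.norm_ofReal, abs_norm,
    inv_mul_cancel₀ (norm_ne_zero_iff.2 h)]

theorem DemocraticWith.one_le {seq : ℕ → ℕ} {Δ : ℝ} (hΔ : B.DemocraticWith seq Δ) : 1 ≤ Δ := by
  have h := hΔ {seq 0} {seq 0} ⟨by simp, le_rfl⟩
  rw [ones, Finset.sum_singleton] at h
  exact le_of_mul_le_mul_right (by simpa using h) (norm_pos_iff.2 (B.e_ne_zero _))

namespace QuasiGreedyWith

variable {C : ℝ} (hC : B.QuasiGreedyWith C)
include hC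

theorem one_le : 1 ≤ C := by
  have h := hC (B.ones {0}) {0} (Finset.singleton_nonempty 0) (isGreedySet_ones subset_rfl)
  rw [proj_ones, Finset.inter_self, ones, Finset.sum_singleton] at h
  exact le_of_mul_le_mul_right (by simpa using h) (norm_pos_iff.2 (B.e_ne_zero 0))

theorem norm_proj_le {x : X} {A : Finset ℕ} (hA : B.IsGreedySet x A) :
    ‖B.proj A x‖ ≤ C * ‖x‖ := by
  rcases A.eq_empty_or_nonempty with rfl | hne
  · simpa using mul_nonneg (zero_le_one.trans hC.one_le) (norm_nonneg x)
  · exact hC x A hne hA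

theorem norm_sub_proj_le {x : X} {A : Finset ℕ} (hA : B.IsGreedySet x A) :
    ‖x - B.proj A x‖ ≤ (1 + C) * ‖x‖ := by
  linarith [norm_sub_le x (B.proj A x), hC.norm_proj_le hA]

section Signs

variable {ε : ℕ → 𝕜} {A : Finset ℕ} (hε : ∀ n ∈ A, ‖ε n‖ = 1)
include hε

theorem norm_sum_ofReal_smul_le {c : ℕ → ℝ} {K : ℝ} (hK : 0 ≤ K)
    (hc : ∀ n ∈ A, 0 ≤ c n ∧ c n ≤ K) :
    ‖∑ n ∈ A, (c n : 𝕜) • ε n • B.e n‖ ≤ K * (C * ‖B.sgnSum ε A‖) := by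
  refine norm_sum_smul_le_of_superlevel A _ c hK hc fun s => ?_
  have hS := Finset.filter_subset (s < c ·) A
  have h := hC.norm_proj_le (isGreedySet_sgnSum hε hS)
  rwa [proj_sgnSum, Finset.inter_eq_left.2 hS] at h

theorem norm_sum_real_smul_le {t : ℕ → ℝ} {α : ℝ} (hα : 0 ≤ α) (ht : ∀ n ∈ A, |t n| ≤ α) :
    ‖∑ n ∈ A, (t n : 𝕜) • ε n • B.e n‖ ≤ 2 * α * (C * ‖B.sgnSum ε A‖) := by
  have hsplit : ∑ n ∈ A, (t n : 𝕜) • ε n • B.e n =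
      ∑ n ∈ A, ((max (t n) 0 : ℝ) : 𝕜) • ε n • B.e n -
        ∑ n ∈ A, ((max (-t n) 0 : ℝ) : 𝕜) • ε n • B.e n := by
    rw [← Finset.sum_sub_distrib]
    refine Finset.sum_congr rfl fun n _ => ?_
    rw [← sub_smul, ← RCLike.ofReal_sub, max_zero_sub_max_neg_zero_eq_self]
  have hpos := hC.norm_sum_ofReal_smul_le hε hα (c := fun n => max (t n) 0)
    fun n hn => ⟨le_max_right _ _, max_le ((le_abs_self _).trans (ht n hn)) hα⟩
  have hneg := hC.norm_sum_ofReal_smul_le hε hα (c := fun n => max (-t n) 0)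
    fun n hn => ⟨le_max_right _ _, max_le ((neg_le_abs _).trans (ht n hn)) hα⟩
  rw [hsplit]
  linarith [norm_sub_le (∑ n ∈ A, ((max (t n) 0 : ℝ) : 𝕜) • ε n • B.e n)
    (∑ n ∈ A, ((max (-t n) 0 : ℝ) : 𝕜) • ε n • B.e n)]

theorem norm_sum_smul_le {b : ℕ → 𝕜} {α : ℝ} (hα : 0 ≤ α) (hb : ∀ n ∈ A, ‖b n‖ ≤ α) :
    ‖∑ n ∈ A, b n • ε n • B.e n‖ ≤ 4 * α * (C * ‖B.sgnSum ε A‖) := by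
  have hsplit : ∑ n ∈ A, b n • ε n • B.e n =
      ∑ n ∈ A, (RCLike.re (b n) : 𝕜) • ε n • B.e n +
        (RCLike.I : 𝕜) • ∑ n ∈ A, (RCLike.im (b n) : 𝕜) • ε n • B.e n := by
    rw [Finset.smul_sum, ← Finset.sum_add_distrib]
    refine Finset.sum_congr rfl fun n _ => ?_
    conv_lhs => rw [← RCLike.re_add_im (b n)]
    rw [add_smul, mul_comm, mul_smul]
  have hre := hC.norm_sum_real_smul_le hε hα (t := fun n => RCLike.re (b n))
    fun n hn => (RCLike.abs_re_le_norm _).trans (hb n hn)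
  have him := hC.norm_sum_real_smul_le hε hα (t := fun n => RCLike.im (b n))
    fun n hn => (RCLike.abs_im_le_norm _).trans (hb n hn)
  have hI : ‖(RCLike.I : 𝕜)‖ ≤ 1 := by
    rw [RCLike.norm_I]
    split_ifs <;> norm_num
  rw [hsplit]
  calc _ ≤ _ := norm_add_le _ _
    _ ≤ 2 * α * (C * ‖B.sgnSum ε A‖) + 1 * (2 * α * (C * ‖B.sgnSum ε A‖)) := by
        rw [norm_smul]
        gcongr
    _ = 4 * α * (C * ‖B.sgnSum ε A‖) := by ring

theorem norm_ones_le : ‖B.ones A‖ ≤ 4 * C * ‖B.sgnSum ε A‖ := by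
  have h := hC.norm_sum_smul_le hε zero_le_one (b := fun n => (ε n)⁻¹)
    fun n hn => by rw [norm_inv, hε n hn, inv_one]
  have hones : ∑ n ∈ A, (ε n)⁻¹ • ε n • B.e n = B.ones A := by
    refine Finset.sum_congr rfl fun n hn => ?_
    rw [smul_smul, inv_mul_cancel₀ (norm_ne_zero_iff.1 ((hε n hn).trans_ne one_ne_zero)),
      one_smul]
  rw [hones] at h
  linarith

end Signs

theorem norm_sum_smul_e_le {A : Finset ℕ} {b : ℕ → 𝕜} {α : ℝ} (hα : 0 ≤ α)
    (hb : ∀ n ∈ A, ‖b n‖ ≤ α) : ‖∑ n ∈ A, b n • B.e n‖ ≤ 4 * C * α * ‖B.ones A‖ := by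
  have h := hC.norm_sum_smul_le (ε := fun _ => 1) (fun _ _ => norm_one) hα hb
  simp only [one_smul, ← ones_eq_sgnSum] at h
  linarith

theorem norm_smul_sgnSum_coordSign_le {y : X} {G : Finset ℕ} (hG : B.IsGreedySet y G) {α : ℝ}
    (hα : 0 < α) (hαG : ∀ n ∈ G, α ≤ ‖B.coord n y‖) :
    ‖(α : 𝕜) • B.sgnSum (B.coordSign y) G‖ ≤ 2 * C * ‖y‖ := by
  have hpos : ∀ n ∈ G, 0 < ‖B.coord n y‖ := fun n hn => hα.trans_le (hαG n hn)
  -- `α sgn(a_n) = (α / |a_n|) a_n`, with `α / |a_n| ∈ [0, 1]` increasing as `|a_n|` decreases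
  have hsum : (α : 𝕜) • B.sgnSum (B.coordSign y) G =
      ∑ n ∈ G, ((α / ‖B.coord n y‖ : ℝ) : 𝕜) • B.coord n y • B.e n := by
    rw [sgnSum, Finset.smul_sum]
    refine Finset.sum_congr rfl fun n hn => ?_
    rw [coordSign, smul_smul, smul_smul, RCLike.ofReal_div]
    field_simp [(hpos n hn).ne']
  rw [hsum, ← one_mul (2 * C * ‖y‖)]
  refine norm_sum_smul_le_of_superlevel G _ _ zero_le_one
    (fun n hn => ⟨by positivity, div_le_one_of_le₀ (hαG n hn) (norm_nonneg _)⟩) fun s => ?_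
  set H := G.filter (fun n => α / ‖B.coord n y‖ ≤ s)
  have hH : B.IsGreedySet y H := by
    intro p hp q hq
    obtain ⟨hpG, hps⟩ := Finset.mem_filter.1 hp
    by_cases hqG : q ∈ G
    · have hsq : s < α / ‖B.coord q y‖ := not_le.1 fun h => hq (Finset.mem_filter.2 ⟨hqG, h⟩)
      exact ((div_lt_div_iff_of_pos_left hα (hpos p hpG) (hpos q hqG)).1
        (hps.trans_lt hsq)).le
    · exact hG p hpG q hqG
  have hdiff : ∑ n ∈ G with s < α / ‖B.coord n y‖, B.coord n y • B.e n =
      B.proj G y - B.proj H y := by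
    rw [eq_sub_iff_add_eq, add_comm, proj, proj]
    simp only [H, ← not_le]
    exact Finset.sum_filter_add_sum_filter_not _ _ _
  rw [hdiff]
  linarith [norm_sub_le (B.proj G y) (B.proj H y), hC.norm_proj_le hG, hC.norm_proj_le hH]

theorem mul_norm_ones_le {y : X} {G : Finset ℕ} (hG : B.IsGreedySet y G) {α : ℝ} (hα : 0 ≤ α)
    (hαG : ∀ n ∈ G, α ≤ ‖B.coord n y‖) : α * ‖B.ones G‖ ≤ 8 * C ^ 2 * ‖y‖ := by
  have hC0 : 0 ≤ C := zero_le_one.trans hC.one_le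
  rcases hα.eq_or_lt with rfl | hα
  · simp only [zero_mul]
    positivity
  have hsign : ∀ n ∈ G, ‖B.coordSign y n‖ = 1 := fun n hn =>
    norm_coordSign (norm_pos_iff.1 (hα.trans_le (hαG n hn)))
  calc α * ‖B.ones G‖ ≤ α * (4 * C * ‖B.sgnSum (B.coordSign y) G‖) := by
        gcongr
        exact hC.norm_ones_le hsign
    _ = 4 * C * ‖(α : 𝕜) • B.sgnSum (B.coordSign y) G‖ := by
        rw [norm_smul, RCLike.norm_ofReal, abs_of_pos hα]
        ring
    _ ≤ 4 * C * (2 * C * ‖y‖) := by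
        gcongr
        exact hC.norm_smul_sgnSum_coordSign_le hG hα hαG
    _ = 8 * C ^ 2 * ‖y‖ := by ring

end QuasiGreedyWith

theorem QuasiGreedyWith.almostGreedyWith {C Δ : ℝ} {seq : ℕ → ℕ} (hC : B.QuasiGreedyWith C)
    (hΔ : B.DemocraticWith seq Δ) : B.AlmostGreedyWith seq (1 + C + 32 * C ^ 3 * Δ) := by
  intro x m hm A hAcard hA D hDseq hDcard
  have hC0 : 0 ≤ C := zero_le_one.trans hC.one_le
  have hΔ0 : 0 ≤ Δ := zero_le_one.trans hΔ.one_le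
  set y := x - B.proj D x
  have hy : ∀ n, B.coord n y = if n ∈ D then 0 else B.coord n x := fun n => by
    by_cases hn : n ∈ D <;> simp [y, coord_proj, hn]
  have hAne : A.Nonempty := Finset.card_pos.1 (by omega)
  set α := A.inf' hAne (fun n => ‖B.coord n x‖)
  have hyA : B.IsGreedySet y (A \ D) := by
    intro a ha b hb
    obtain ⟨haA, haD⟩ := Finset.mem_sdiff.1 ha
    rw [hy, hy, if_neg haD]
    split_ifs with hbD
    · simp
    · exact hA a haA b fun hbA => hb (Finset.mem_sdiff.2 ⟨hbA, hbD⟩)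
  have hα : 0 ≤ α := Finset.le_inf' hAne _ fun _ _ => norm_nonneg _
  have hhead : ‖y - B.proj (A \ D) y‖ ≤ (1 + C) * ‖y‖ := hC.norm_sub_proj_le hyA
  have htail : ‖B.proj (D \ A) x‖ ≤ 4 * C * α * ‖B.ones (D \ A)‖ :=
    hC.norm_sum_smul_e_le hα fun n hn =>
      Finset.le_inf' hAne _ fun a ha => hA a ha n (Finset.mem_sdiff.1 hn).2
  have hdem : ‖B.ones (D \ A)‖ ≤ Δ * ‖B.ones (A \ D)‖ :=
    hΔ _ _ ⟨(Finset.coe_subset.2 Finset.sdiff_subset).trans hDseq,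
      (Finset.card_sdiff_comm (hDcard.trans hAcard.symm)).le⟩
  have htrunc : α * ‖B.ones (A \ D)‖ ≤ 8 * C ^ 2 * ‖y‖ :=
    hC.mul_norm_ones_le hyA hα fun n hn => by
      rw [hy, if_neg (Finset.mem_sdiff.1 hn).2]
      exact Finset.inf'_le _ (Finset.mem_sdiff.1 hn).1
  rw [B.sub_proj_eq_sub_proj_sdiff_add A D x]
  calc _ ≤ ‖y - B.proj (A \ D) y‖ + ‖B.proj (D \ A) x‖ := norm_add_le _ _
    _ ≤ (1 + C) * ‖y‖ + 4 * C * Δ * (α * ‖B.ones (A \ D)‖) := by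
        have := mul_le_mul_of_nonneg_left hdem (by positivity : 0 ≤ 4 * C * α)
        linarith
    _ ≤ (1 + C) * ‖y‖ + 4 * C * Δ * (8 * C ^ 2 * ‖y‖) := by gcongr
    _ = (1 + C + 32 * C ^ 3 * Δ) * ‖y‖ := by ring

-- `x` is close to a finite combination of the `e_n`, whose coordinates vanish off a finite set
theorem finite_setOf_lt_norm_coord (x : X) {δ : ℝ} (hδ : 0 < δ) :
    {n | δ < ‖B.coord n x‖}.Finite := by
  obtain ⟨c₁, c₂, hc₁, hlow, hhigh⟩ := B.norm_bounds
  have hc₂ : 0 < c₂ := hc₁.trans_le ((hlow 0).2.trans (hhigh 0).2)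
  obtain ⟨z, hz, hxz⟩ := B.dense_span.exists_dist_lt x (div_pos hδ hc₂)
  obtain ⟨f, rfl⟩ := Finsupp.mem_span_range_iff_exists_finsupp.1 hz
  refine f.support.finite_toSet.subset fun n hn => ?_
  by_contra hnf
  have hzn : B.coord n (f.sum fun i a => a • B.e i) = 0 := by
    rw [Finsupp.sum, coord_sum_smul, if_neg (by simpa using hnf)]
  refine (show δ < ‖B.coord n x‖ from hn).not_ge ?_
  calc ‖B.coord n x‖ = ‖B.coord n (x - f.sum fun i a => a • B.e i)‖ := by
        rw [map_sub, hzn, sub_zero]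
    _ ≤ c₂ * (δ / c₂) := by
        refine ((B.coord n).le_opNorm _).trans (mul_le_mul (hhigh n).2 ?_ (norm_nonneg _)
          hc₂.le)
        exact (dist_eq_norm x _ ▸ hxz).le
    _ = δ := mul_div_cancel₀ δ hc₂.ne'

theorem exists_norm_proj_le {seq : ℕ → ℕ} (hseq : Function.Injective seq) (x : X) (m : ℕ)
    {δ : ℝ} (hδ : 0 < δ) :
    ∃ E : Finset ℕ, (↑E : Set ℕ) ⊆ Set.range seq ∧ E.card = m ∧ ‖B.proj E x‖ ≤ δ := by
  obtain ⟨c₁, c₂, -, -, hhigh⟩ := B.norm_bounds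
  have hc₂ : 0 ≤ c₂ := (norm_nonneg _).trans (hhigh 0).1
  set δ' := δ / (m * c₂ + 1)
  have hδ' : 0 < δ' := by positivity
  obtain ⟨E, hEseq, hEcard, hEsmall⟩ :=
    exists_finset_subset_range_disjoint hseq (B.finite_setOf_lt_norm_coord x hδ') m
  refine ⟨E, hEseq, hEcard, ?_⟩
  calc ‖B.proj E x‖ ≤ ∑ n ∈ E, ‖B.coord n x • B.e n‖ := norm_sum_le _ _
    _ ≤ ∑ _n ∈ E, δ' * c₂ := by
        refine Finset.sum_le_sum fun n hn => ?_
        rw [norm_smul]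
        exact mul_le_mul (not_lt.1 (Set.disjoint_left.1 hEsmall hn)) (hhigh n).1
          (norm_nonneg _) hδ'.le
    _ ≤ (m * c₂ + 1) * δ' := by
        rw [Finset.sum_const, hEcard, nsmul_eq_mul]
        nlinarith
    _ = δ := mul_div_cancel₀ δ (by positivity)

namespace AlmostGreedyWith

variable {seq : ℕ → ℕ} {C : ℝ} (hAG : B.AlmostGreedyWith seq C)
  (hseq : Function.Injective seq)
include hAG hseq

theorem suppQGWith (hC : 0 < C) : B.SuppQGWith C := by
  intro x A hAne hA
  refine le_of_forall_pos_le_add fun η hη => ?_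
  obtain ⟨E, hEseq, hEcard, hE⟩ := B.exists_norm_proj_le hseq x A.card (div_pos hη hC)
  calc ‖x - B.proj A x‖ ≤ C * ‖x - B.proj E x‖ :=
        hAG x _ (Finset.card_pos.2 hAne) A rfl hA E hEseq hEcard
    _ ≤ C * (‖x‖ + η / C) := by
        gcongr
        linarith [norm_sub_le x (B.proj E x)]
    _ = C * ‖x‖ + η := by field_simp

theorem norm_ones_le {P Q : Finset ℕ} (hP : (↑P : Set ℕ) ⊆ Set.range seq) (hPQ : Disjoint P Q)
    (hcard : P.card ≤ Q.card) : ‖B.ones P‖ ≤ C * ‖B.ones Q‖ := by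
  rcases Q.eq_empty_or_nonempty with rfl | hQ
  · simp [Finset.card_eq_zero.1 (Nat.le_zero.1 hcard), ones]
  obtain ⟨R, hRseq, hRcard, hR⟩ :=
    exists_finset_subset_range_disjoint hseq (P ∪ Q).finite_toSet (Q.card - P.card)
  rw [Finset.disjoint_coe, Finset.disjoint_union_right] at hR
  have h := hAG (B.ones (P ∪ Q)) Q.card (Finset.card_pos.2 hQ) Q rfl
    (isGreedySet_ones Finset.subset_union_right) (P ∪ R)
    (by rw [Finset.coe_union]; exact Set.union_subset hP hRseq)
    (by rw [Finset.card_union_of_disjoint hR.1.symm]; omega)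
  have hsdiff : (P ∪ Q) \ (P ∪ R) = Q := by
    ext n
    have hPQn : n ∈ P → n ∉ Q := fun h => Finset.disjoint_left.1 hPQ h
    have hQRn : n ∈ Q → n ∉ R := fun h => Finset.disjoint_right.1 hR.2 h
    simp only [Finset.mem_sdiff, Finset.mem_union]
    tauto
  rwa [ones_sub_proj_ones, ones_sub_proj_ones, Finset.union_sdiff_cancel_right hPQ, hsdiff] at h

theorem democraticWith (hC : 0 ≤ C) : B.DemocraticWith seq (C * C) := by
  rintro A D ⟨hA, hcard⟩
  obtain ⟨F, hFseq, hFcard, hF⟩ :=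
    exists_finset_subset_range_disjoint hseq (A ∪ D).finite_toSet A.card
  rw [Finset.coe_union, Set.disjoint_union_right] at hF
  calc ‖B.ones A‖ ≤ C * ‖B.ones F‖ :=
        hAG.norm_ones_le hseq hA (Finset.disjoint_coe.1 hF.1.symm) hFcard.ge
    _ ≤ C * (C * ‖B.ones D‖) := by
        gcongr
        exact hAG.norm_ones_le hseq hFseq (Finset.disjoint_coe.1 hF.2) (hFcard ▸ hcard)
    _ = C * C * ‖B.ones D‖ := by ring

end AlmostGreedyWith

theorem SuppQGWith.quasiGreedyWith {C : ℝ} (h : B.SuppQGWith C) : B.QuasiGreedyWith (1 + C) :=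
  fun x A hA hgr =>
    calc ‖B.proj A x‖ = ‖x - (x - B.proj A x)‖ := by rw [sub_sub_cancel]
      _ ≤ ‖x‖ + C * ‖x‖ := (norm_sub_le _ _).trans (by linarith [h x A hA hgr])
      _ = (1 + C) * ‖x‖ := by ring

end BasisOf

theorem statement12_general {𝕜 X : Type*} [RCLike 𝕜] [NormedAddCommGroup X] [NormedSpace 𝕜 X]
    (B : BasisOf 𝕜 X) (seq : ℕ → ℕ) (hseq : StrictMono seq) :
    B.AlmostGreedy seq ↔ B.QuasiGreedy ∧ B.Democratic seq := by
  constructor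
  · rintro ⟨C, hC1, hAG⟩
    exact ⟨⟨1 + C, (hAG.suppQGWith hseq.injective (by linarith)).quasiGreedyWith⟩,
      ⟨C * C, hAG.democraticWith hseq.injective (by linarith)⟩⟩
  · rintro ⟨⟨C, hC⟩, Δ, hΔ⟩
    have hC0 : 0 ≤ C := zero_le_one.trans hC.one_le
    have hΔ0 : 0 ≤ Δ := zero_le_one.trans hΔ.one_le
    refine ⟨_, ?_, hC.almostGreedyWith hΔ⟩
    nlinarith [mul_nonneg (pow_nonneg hC0 3) hΔ0]

/-- A basis is (𝐧, almost greedy) iff it is quasi-greedy and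
(𝐧, democratic). -/
theorem statement12 {𝕜 X : Type*} [RCLike 𝕜] [NormedAddCommGroup X] [NormedSpace 𝕜 X]
    [CompleteSpace X] (B : BasisOf 𝕜 X) (seq : ℕ → ℕ) (hseq : StrictMono seq) :
    B.AlmostGreedy seq ↔ B.QuasiGreedy ∧ B.Democratic seq :=
  statement12_general B seq hseq
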